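/- arXiv:2401.12260 — 6 statements merged into one kernel-verified Lean document; each statement's English description precedes it below -/
import Mathlib

section
/- For all real numbers a > 0 and k > 0, ∫_ℝ e^{2πiku}/(u − ia)² du = −4π²k e^{−2πka}, where the integral is taken over the real line with respect to Lebesgue measure and i is the imaginary unit. -/
/-!
Let `f t = t e^{-2πat}` for `t > 0` and `f t = 0` otherwise. A Laplace-transform computation gives
`𝓕 f u = 1 / (2π(a + iu))² = -1 / (4π² (u - ia)²)`, which is integrable because `a > 0`.
The integral in question is therefore `-4π²` times the inverse Fourier transform of `𝓕 f` at `k`,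
and Fourier inversion at the continuity point `k > 0` of `f` evaluates it as `-4π² k e^{-2πak}`.
-/

open MeasureTheory Set Filter Topology Real FourierTransform Complex

lemma norm_cexp_neg_mul_ofReal (c : ℂ) (t : ℝ) : ‖cexp (-(c * t))‖ = rexp (-(c.re * t)) := by
  simp [Complex.norm_exp]

lemma integrableOn_ofReal_mul_cexp_neg_mul_Ioi {c : ℂ} (hc : 0 < c.re) :
    IntegrableOn (fun t : ℝ => (t : ℂ) * cexp (-(c * t))) (Ioi 0) := by
  have hreal : IntegrableOn (fun t : ℝ => t * rexp (-(c.re * t))) (Ioi 0) := by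
    simpa [Real.rpow_one, neg_mul] using
      integrableOn_rpow_mul_exp_neg_mul_rpow (s := 1) (p := 1) (by norm_num) one_pos hc
  refine hreal.mono' (by fun_prop) ?_
  filter_upwards [ae_restrict_mem measurableSet_Ioi] with t (ht : 0 < t)
  rw [norm_mul, norm_cexp_neg_mul_ofReal, norm_real, Real.norm_of_nonneg ht.le]

lemma tendsto_cexp_neg_mul_ofReal_atTop {c : ℂ} (hc : 0 < c.re) :
    Tendsto (fun t : ℝ => cexp (-(c * t))) atTop (𝓝 0) := by
  rw [tendsto_zero_iff_norm_tendsto_zero]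
  simp_rw [norm_cexp_neg_mul_ofReal]
  exact Real.tendsto_exp_atBot.comp <| tendsto_neg_atTop_atBot.comp <|
    tendsto_id.const_mul_atTop hc

lemma tendsto_ofReal_mul_cexp_neg_mul_atTop {c : ℂ} (hc : 0 < c.re) :
    Tendsto (fun t : ℝ => (t : ℂ) * cexp (-(c * t))) atTop (𝓝 0) := by
  rw [tendsto_zero_iff_norm_tendsto_zero]
  refine (tendsto_rpow_mul_exp_neg_mul_atTop_nhds_zero 1 c.re hc).congr' ?_
  filter_upwards [eventually_ge_atTop 0] with t ht
  rw [norm_mul, norm_cexp_neg_mul_ofReal, norm_real, Real.norm_of_nonneg ht, Real.rpow_one,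
    neg_mul]

theorem integral_ofReal_mul_cexp_neg_mul_Ioi {c : ℂ} (hc : 0 < c.re) :
    ∫ t in Ioi (0 : ℝ), (t : ℂ) * cexp (-(c * t)) = (c ^ 2)⁻¹ := by
  have hc0 : c ≠ 0 := fun h => by simp [h] at hc
  set F : ℝ → ℂ := fun t => -(t / c + 1 / c ^ 2) * cexp (-(c * t))
  have hF : ∀ t : ℝ, HasDerivAt F (t * cexp (-(c * t))) t := by
    intro t
    have hofReal : HasDerivAt (fun t : ℝ => (t : ℂ)) 1 t := (hasDerivAt_id t).ofReal_comp
    have hlin : HasDerivAt (fun t : ℝ => -((t : ℂ) / c + 1 / c ^ 2)) (-(1 / c)) t :=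
      ((hofReal.div_const c).add_const _).fun_neg
    have hexp : HasDerivAt (fun t : ℝ => cexp (-(c * t))) (cexp (-(c * t)) * -(c * 1)) t :=
      (hofReal.const_mul c).fun_neg.cexp
    refine (hlin.fun_mul hexp).congr_deriv ?_
    field_simp
    ring
  have hF_lim : Tendsto F atTop (𝓝 0) := by
    have := ((tendsto_ofReal_mul_cexp_neg_mul_atTop hc).const_mul (1 / c)).add
      ((tendsto_cexp_neg_mul_ofReal_atTop hc).const_mul (1 / c ^ 2))
    simpa using this.neg.congr fun t => by ring
  rw [integral_Ioi_of_hasDerivAt_of_tendsto (hF 0).continuousAt.continuousWithinAt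
    (fun t _ => hF t) (integrableOn_ofReal_mul_cexp_neg_mul_Ioi hc) hF_lim]
  simp [F]

theorem fourier_indicator_Ioi_ofReal_mul_cexp_neg_mul {c : ℂ} (hc : 0 < c.re) (w : ℝ) :
    𝓕 ((Ioi 0).indicator fun t : ℝ => (t : ℂ) * cexp (-(c * t))) w
      = ((c + 2 * π * I * w) ^ 2)⁻¹ := by
  have hcw : 0 < (c + 2 * π * I * w).re := by simpa using hc
  rw [Real.fourier_real_eq_integral_exp_smul, ← integral_ofReal_mul_cexp_neg_mul_Ioi hcw,
    ← integral_indicator measurableSet_Ioi]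
  congr 1
  ext t
  by_cases ht : t ∈ Ioi 0
  · rw [indicator_of_mem ht, indicator_of_mem ht, smul_eq_mul, mul_left_comm, ← Complex.exp_add]
    push_cast
    ring_nf
  · simp [indicator_of_notMem ht]

theorem integrable_inv_ofReal_sub_sq {z : ℂ} (hz : z.im ≠ 0) :
    Integrable fun u : ℝ => (((u : ℂ) - z) ^ 2)⁻¹ := by
  set C := max 1 (z.im ^ 2)⁻¹
  refine ((integrable_inv_one_add_sq.comp_sub_right z.re).const_mul C).mono' (by fun_prop)
    (.of_forall fun u => ?_)
  have hy : 0 < z.im ^ 2 := by positivity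
  have hnorm : ‖(((u : ℂ) - z) ^ 2)⁻¹‖ = ((u - z.re) ^ 2 + z.im ^ 2)⁻¹ := by
    rw [norm_inv, norm_pow, Complex.sq_norm, normSq_apply]
    simp only [sub_re, ofReal_re, sub_im, ofReal_im, zero_sub]
    ring
  have hC : 1 + (u - z.re) ^ 2 ≤ C * ((u - z.re) ^ 2 + z.im ^ 2) := by
    have h1 : (u - z.re) ^ 2 ≤ C * (u - z.re) ^ 2 :=
      le_mul_of_one_le_left (sq_nonneg _) (le_max_left _ _)
    have h2 : 1 ≤ C * z.im ^ 2 :=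
      (inv_mul_cancel₀ hy.ne').symm.le.trans (mul_le_mul_of_nonneg_right (le_max_right _ _) hy.le)
    linarith
  rw [hnorm, ← div_eq_mul_inv, le_div_iff₀ (by positivity), inv_mul_eq_div,
    div_le_iff₀ (by positivity)]
  linarith

lemma fourierInv_real_eq_integral_exp_smul {E : Type*} [NormedAddCommGroup E] [NormedSpace ℂ E]
    (f : ℝ → E) (w : ℝ) : 𝓕⁻ f w = ∫ v : ℝ, cexp (↑(2 * π * v * w) * I) • f v := by
  simp only [Real.fourierInv_eq_fourier_neg, Real.fourier_real_eq_integral_exp_smul, mul_neg,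
    neg_mul, neg_neg]

/-- For all real `a > 0` and `k > 0`,
`∫_ℝ e^{2πiku} / (u - ia)² du = -4π²k e^{-2πka}`. -/
theorem stmt7 (a k : ℝ) (ha : 0 < a) (hk : 0 < k) :
    ∫ u : ℝ, Complex.exp (2 * Real.pi * Complex.I * k * u) / ((u : ℂ) - Complex.I * a) ^ 2
      = ((-4 * Real.pi ^ 2 * k * Real.exp (-2 * Real.pi * k * a) : ℝ) : ℂ) := by
  set g : ℝ → ℂ := fun t => t * cexp (-((2 * π * a : ℝ) * t))
  set f := (Ioi 0).indicator g
  have hc : 0 < ((2 * π * a : ℝ) : ℂ).re := by rw [ofReal_re]; positivity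
  have hFf : ∀ u : ℝ, 𝓕 f u = ((2 * π * I) ^ 2)⁻¹ * (((u : ℂ) - I * a) ^ 2)⁻¹ := fun u => by
    rw [fourier_indicator_Ioi_ofReal_mul_cexp_neg_mul hc, ← mul_inv, ← mul_pow]
    push_cast
    congr 2
    linear_combination (2 * π * a : ℂ) * I_sq
  have hFf_int : Integrable (𝓕 f) :=
    funext hFf ▸ (integrable_inv_ofReal_sub_sq (by simpa using ha.ne')).const_mul _
  have hf_cont : ContinuousAt f k :=
    (by fun_prop : Continuous g).continuousAt.congr <|
      eventually_of_mem (Ioi_mem_nhds hk) fun t ht => (indicator_of_mem ht g).symm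
  have hinv : 𝓕⁻ (𝓕 f) k = g k :=
    ((integrableOn_ofReal_mul_cexp_neg_mul_Ioi hc).integrable_indicator measurableSet_Ioi
      |>.fourierInv_fourier_eq hFf_int hf_cont).trans (indicator_of_mem (mem_Ioi.2 hk) g)
  calc _ = (2 * π * I) ^ 2 * 𝓕⁻ (𝓕 f) k := by
        rw [fourierInv_real_eq_integral_exp_smul, ← integral_const_mul]
        congr 1 with u
        rw [hFf, smul_eq_mul, mul_left_comm,
          mul_inv_cancel_left₀ (pow_ne_zero 2 (by simp [pi_ne_zero])), div_eq_mul_inv]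
        congr 2
        push_cast
        ring
    _ = _ := by
      rw [hinv, mul_pow, I_sq]
      simp only [g]
      push_cast
      ring_nf
end

section
/- Let m ≥ 2 be an integer, ω = exp(2πi/m), ℓ an integer with 1 ≤ ℓ ≤ m − 1, and k a positive integer divisible by m. Then ∑_{s=1}^{k−1} s(k − s) ω^{ℓ(s−1)} = 2k/(1 − ω^ℓ)². -/
lemma sumA (x : ℂ) (n : ℕ) :
    (∑ s ∈ Finset.range n, ((s : ℂ) + 1) * x ^ s) * (1 - x) ^ 2
      = 1 - ((n : ℂ) + 1) * x ^ n + (n : ℂ) * x ^ (n + 1) := by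
  induction n with
  | zero => simp
  | succ n ih =>
    rw [Finset.sum_range_succ, add_mul, ih]
    push_cast
    ring

lemma sumB (x : ℂ) (n : ℕ) :
    (∑ s ∈ Finset.range n, ((s : ℂ) + 1) * (((n : ℂ) + 1) - ((s : ℂ) + 1)) * x ^ s)
        * (1 - x) ^ 2
      = (n : ℂ) + (n : ℂ) * x ^ (n + 1)
        - 2 * ∑ s ∈ Finset.range n, x ^ (s + 1) := by
  induction n with
  | zero => simp
  | succ n ih =>
    have split : ∑ s ∈ Finset.range (n + 1),
          ((s : ℂ) + 1) * ((((n : ℕ) + 1 : ℕ) : ℂ) + 1 - ((s : ℂ) + 1)) * x ^ s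
        = (∑ s ∈ Finset.range n, ((s : ℂ) + 1) * (((n : ℂ) + 1) - ((s : ℂ) + 1)) * x ^ s)
          + ∑ s ∈ Finset.range (n + 1), ((s : ℂ) + 1) * x ^ s := by
      have h0 : ∑ s ∈ Finset.range (n + 1),
            ((s : ℂ) + 1) * (((n : ℂ) + 1) - ((s : ℂ) + 1)) * x ^ s
          = ∑ s ∈ Finset.range n, ((s : ℂ) + 1) * (((n : ℂ) + 1) - ((s : ℂ) + 1)) * x ^ s := by
        rw [Finset.sum_range_succ]; simp
      rw [← h0, ← Finset.sum_add_distrib]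
      apply Finset.sum_congr rfl
      intro s _
      push_cast
      ring
    rw [split, add_mul, ih, sumA, Finset.sum_range_succ (fun s => x ^ (s + 1))]
    push_cast
    ring

/-- Let `m ≥ 2`, `ω = exp(2πi/m)`, `1 ≤ ℓ ≤ m - 1`, and let `k` be a
positive integer divisible by `m`.  Then
`∑_{s=1}^{k-1} s (k - s) ω^{ℓ(s-1)} = 2k / (1 - ω^ℓ)²`. -/
theorem stmt10 (m : ℕ) (hm : 2 ≤ m) (ℓ : ℕ) (hℓ1 : 1 ≤ ℓ) (hℓ2 : ℓ ≤ m - 1)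
    (k : ℕ) (hk : 0 < k) (hdvd : m ∣ k) :
    ∑ s ∈ Finset.Icc 1 (k - 1),
        (s : ℂ) * ((k : ℂ) - (s : ℂ)) *
          Complex.exp (2 * Real.pi * Complex.I / m) ^ (ℓ * (s - 1))
      = 2 * (k : ℂ) / (1 - Complex.exp (2 * Real.pi * Complex.I / m) ^ ℓ) ^ 2 := by
  have hm0 : (m : ℕ) ≠ 0 := by omega
  set ω := Complex.exp (2 * Real.pi * Complex.I / m) with hω
  have hprim : IsPrimitiveRoot ω m := Complex.isPrimitiveRoot_exp m hm0
  set ζ := ω ^ ℓ with hζ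
  have hζ1 : ζ ≠ 1 := hprim.pow_ne_one_of_pos_of_lt (by omega) (by omega)
  have hωk : ω ^ k = 1 := (hprim.pow_eq_one_iff_dvd k).mpr hdvd
  have hζk : ζ ^ k = 1 := by
    rw [hζ, ← pow_mul, mul_comm, pow_mul, hωk, one_pow]
  have hne : (1 : ℂ) - ζ ≠ 0 := sub_ne_zero.mpr (Ne.symm hζ1)
  have hgeom : ∑ s ∈ Finset.range k, ζ ^ s = 0 := by
    rw [geom_sum_eq hζ1, hζk]
    simp
  -- k is at least 2
  have hk2 : 2 ≤ k := le_trans hm (Nat.le_of_dvd hk hdvd)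
  obtain ⟨n, rfl⟩ : ∃ n, k = n + 1 := ⟨k - 1, by omega⟩
  -- rewrite the sum
  have hsum : ∑ s ∈ Finset.Icc 1 (n + 1 - 1),
        (s : ℂ) * (((n + 1 : ℕ) : ℂ) - (s : ℂ)) * ω ^ (ℓ * (s - 1))
      = ∑ s ∈ Finset.range n, ((s : ℂ) + 1) * (((n : ℂ) + 1) - ((s : ℂ) + 1)) * ζ ^ s := by
    rw [Nat.add_sub_cancel, ← Finset.Ico_add_one_right_eq_Icc, Finset.sum_Ico_eq_sum_range]
    apply Finset.sum_congr rfl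
    intro s _
    have h1 : 1 + s - 1 = s := by omega
    rw [h1, mul_comm ℓ s, pow_mul]
    push_cast
    ring
  rw [hsum]
  rw [eq_div_iff (pow_ne_zero 2 hne), sumB]
  have hs : ∑ s ∈ Finset.range n, ζ ^ (s + 1) = -1 := by
    have h := Finset.sum_range_succ' (fun s => ζ ^ s) n
    rw [hgeom] at h
    have h2 : (∑ s ∈ Finset.range n, ζ ^ (s + 1)) + 1 = 0 := by simpa using h.symm
    linear_combination h2
  rw [hs, hζk]
  push_cast
  ring
end

section
/- Let m ≥ 2 be an integer, ω = exp(2πi/m), and n a positive integer. Then ∑_{ℓ=1}^{m−1} ω^{ℓn}/(1 − ω^ℓ)² = −(m²/2) · ( B₂({(n−1)/m}) − 1/(6m²) ), where B₂(x) = x² − x + 1/6 is the second Bernoulli polynomial and {x} denotes the fractional part of x. -/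
/-!
For an `m`-th root of unity `x ≠ 1`, `x / (1 - x)² = (2m)⁻¹ ∑_{j<m} j (m - j) x^{-j}`, so
each summand `ω^{ℓn} / (1 - ω^ℓ)²` becomes a combination of the characters
`ℓ ↦ ω^{ℓ(n-1-j)}`.
Summing over `1 ≤ ℓ ≤ m - 1` turns each character into `m·[j ≡ n - 1 (mod m)] - 1`, leaving
`(k (m - k) - (m² - 1)/6) / 2` with `k = (n - 1) mod m`, which is the Bernoulli expression.
-/

open Finset

section CommRing

variable {R : Type*} [CommRing R]

theorem six_mul_sum_range_natCast_mul_sub (m : ℕ) :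
    6 * ∑ j ∈ range m, (j : R) * (m - j) = m * (m ^ 2 - 1) := by
  have hgauss : ∀ m : ℕ, 2 * ∑ j ∈ range m, (j : R) = m * (m - 1) := by
    intro m
    induction m with
    | zero => simp
    | succ m ih => rw [sum_range_succ]; push_cast; linear_combination ih
  induction m with
  | zero => simp
  | succ m ih =>
    have hshift : ∑ j ∈ range m, (j : R) * ((m + 1 : ℕ) - j)
        = ∑ j ∈ range m, (j : R) * (m - j) + ∑ j ∈ range m, (j : R) := by
      rw [← sum_add_distrib]; push_cast; exact sum_congr rfl fun j _ => by ring
    rw [sum_range_succ, hshift]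
    push_cast
    linear_combination ih + 3 * hgauss m

theorem sub_one_sq_mul_sum_range_natCast_mul_pow (x : R) (m : ℕ) :
    (x - 1) ^ 2 * ∑ j ∈ range m, (j : R) * x ^ j = (m - 1) * x ^ (m + 1) - m * x ^ m + x := by
  induction m with
  | zero => simp
  | succ m ih => rw [sum_range_succ, mul_add, ih]; push_cast; ring

theorem sub_one_sq_mul_sum_range_natCast_mul_sub_mul_pow (x : R) (m : ℕ) :
    (x - 1) ^ 2 * ∑ j ∈ range m, (j : R) * (m - j) * x ^ j
      = (m + 1) * x - 2 * x * ∑ j ∈ range m, x ^ j + (m - 1) * x ^ m * x := by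
  induction m with
  | zero => simp
  | succ m ih =>
    have hshift : ∑ j ∈ range m, (j : R) * ((m + 1 : ℕ) - j) * x ^ j
        = ∑ j ∈ range m, (j : R) * (m - j) * x ^ j + ∑ j ∈ range m, (j : R) * x ^ j := by
      rw [← sum_add_distrib]; push_cast; exact sum_congr rfl fun j _ => by ring
    rw [sum_range_succ, sum_range_succ, hshift]
    push_cast
    linear_combination ih + sub_one_sq_mul_sum_range_natCast_mul_pow x m

end CommRing

section Field

variable {K : Type*} [Field K] {m : ℕ} {x : K}

theorem sub_one_sq_mul_sum_range_natCast_mul_sub_mul_pow_of_pow_eq_one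
    (hx : x ≠ 1) (hxm : x ^ m = 1) :
    (x - 1) ^ 2 * ∑ j ∈ range m, (j : K) * (m - j) * x ^ j = 2 * m * x := by
  rw [sub_one_sq_mul_sum_range_natCast_mul_sub_mul_pow, geom_sum_eq hx, hxm]
  ring

theorem one_sub_sq_mul_sum_range_natCast_mul_sub_mul_pow_sub_of_pow_eq_one
    (hx : x ≠ 1) (hxm : x ^ m = 1) :
    (1 - x) ^ 2 * ∑ j ∈ range m, (j : K) * (m - j) * x ^ (m - j) = 2 * m * x := by
  rcases m.eq_zero_or_pos with rfl | hm
  · simp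
  have hx0 : x ≠ 0 := by rintro rfl; simp [hm.ne'] at hxm
  have hpow : ∀ j ∈ range m, x ^ (m - j) = x⁻¹ ^ j := fun j hj => by
    rw [pow_sub₀ _ hx0 (mem_range.mp hj).le, hxm, one_mul, inv_pow]
  rw [sum_congr rfl fun j hj => by rw [hpow j hj]]
  have hinv := sub_one_sq_mul_sum_range_natCast_mul_sub_mul_pow_of_pow_eq_one
    (inv_ne_one.mpr hx) (by rw [inv_pow, hxm, inv_one])
  have hsq : (1 - x) ^ 2 = x ^ 2 * (x⁻¹ - 1) ^ 2 := by field_simp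
  rw [hsq, mul_assoc, hinv]
  field_simp

theorem pow_succ_div_one_sub_sq_eq_sum_of_pow_eq_one (hm : (2 * m : K) ≠ 0)
    (hx : x ≠ 1) (hxm : x ^ m = 1) (N : ℕ) :
    x ^ (N + 1) / (1 - x) ^ 2
      = ∑ j ∈ range m, (j : K) * (m - j) * x ^ (N + m - j) / (2 * m) := by
  have hx1 : (1 - x) ^ 2 ≠ 0 := pow_ne_zero _ (sub_ne_zero.mpr hx.symm)
  have hsplit : ∀ j ∈ range m, x ^ (N + m - j) = x ^ N * x ^ (m - j) := fun j hj => by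
    rw [Nat.add_sub_assoc (mem_range.mp hj).le, pow_add]
  rw [← sum_div, sum_congr rfl fun j hj => by rw [hsplit j hj, mul_left_comm], ← mul_sum,
    div_eq_div_iff hx1 hm]
  linear_combination (-x ^ N) *
    one_sub_sq_mul_sum_range_natCast_mul_sub_mul_pow_sub_of_pow_eq_one hx hxm

end Field

theorem IsPrimitiveRoot.sum_Icc_pow_pow {R : Type*} [CommRing R] [IsDomain R] {ω : R} {m : ℕ}
    (hω : IsPrimitiveRoot ω m) (hm : 0 < m) (t : ℕ) :
    ∑ ℓ ∈ Icc 1 (m - 1), (ω ^ t) ^ ℓ = (if m ∣ t then (m : R) else 0) - 1 := by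
  have hIcc : Icc 1 (m - 1) = (range m).erase 0 := by
    ext ℓ; simp only [mem_Icc, mem_erase, mem_range]; omega
  rw [hIcc, sum_erase_eq_sub (mem_range.mpr hm), pow_zero]
  split_ifs with hdvd
  · simp [(hω.pow_eq_one_iff_dvd t).mpr hdvd]
  · have hne : ω ^ t - 1 ≠ 0 := sub_ne_zero.mpr fun h => hdvd ((hω.pow_eq_one_iff_dvd t).mp h)
    have hgeom := geom_sum_mul (ω ^ t) m
    rw [pow_right_comm, hω.pow_eq_one, one_pow, sub_self] at hgeom
    rw [(mul_eq_zero.mp hgeom).resolve_right hne]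

theorem Nat.dvd_add_sub_iff_eq_mod {m N j : ℕ} (hj : j < m) : m ∣ N + m - j ↔ j = N % m := by
  rw [← Nat.modEq_iff_dvd' (by omega), Nat.ModEq, Nat.mod_eq_of_lt hj, Nat.add_mod_right]

theorem IsPrimitiveRoot.twelve_mul_sum_Icc_pow_mul_succ_div_one_sub_sq {K : Type*} [Field K]
    {ω : K} {m : ℕ} (hω : IsPrimitiveRoot ω m) (h2m : (2 * m : K) ≠ 0) (N : ℕ) :
    12 * ∑ ℓ ∈ Icc 1 (m - 1), ω ^ (ℓ * (N + 1)) / (1 - ω ^ ℓ) ^ 2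
      = (6 * (N % m : ℕ) * (m - (N % m : ℕ)) - (m ^ 2 - 1) : K) := by
  have h2 : (2 : K) ≠ 0 := left_ne_zero_of_mul h2m
  have hm0 : (m : K) ≠ 0 := right_ne_zero_of_mul h2m
  have hm : 0 < m := Nat.pos_of_ne_zero (by rintro rfl; simp at hm0)
  have hterm : ∀ ℓ ∈ Icc 1 (m - 1), ω ^ (ℓ * (N + 1)) / (1 - ω ^ ℓ) ^ 2
      = ∑ j ∈ range m, (j : K) * (m - j) * (ω ^ (N + m - j)) ^ ℓ / (2 * m) := by
    intro ℓ hℓ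
    rw [mem_Icc] at hℓ
    have hxm : (ω ^ ℓ) ^ m = 1 := by rw [pow_right_comm, hω.pow_eq_one, one_pow]
    simp_rw [← pow_mul, mul_comm _ ℓ, pow_mul]
    exact pow_succ_div_one_sub_sq_eq_sum_of_pow_eq_one h2m
      (hω.pow_ne_one_of_pos_of_lt (by omega) (by omega)) hxm N
  have hselect : ∀ j ∈ range m,
      (j : K) * (m - j) * ((if m ∣ N + m - j then (m : K) else 0) - 1)
        = (if j = N % m then (j : K) * (m - j) * m else 0) - j * (m - j) := fun j hj => by
    simp only [Nat.dvd_add_sub_iff_eq_mod (mem_range.mp hj)]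
    split_ifs <;> ring
  rw [sum_congr rfl hterm, sum_comm]
  simp_rw [← sum_div, ← mul_sum, hω.sum_Icc_pow_pow hm]
  rw [sum_congr rfl hselect, sum_sub_distrib, sum_ite_eq',
    if_pos (mem_range.mpr (Nat.mod_lt _ hm))]
  field_simp
  linear_combination -2 * six_mul_sum_range_natCast_mul_sub (R := K) m

/-- Let `m ≥ 2`, `ω = exp(2πi/m)`, and let `n` be a positive integer.
Then `∑_{ℓ=1}^{m-1} ω^{ℓn} / (1 - ω^ℓ)² = -(m²/2) (B₂({(n-1)/m}) - 1/(6m²))`, where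
`B₂(x) = x² - x + 1/6` and `{x}` is the fractional part of `x`. -/
theorem stmt13 (m : ℕ) (hm : 2 ≤ m) (n : ℕ) (hn : 0 < n) :
    ∑ ℓ ∈ Finset.Icc 1 (m - 1),
        Complex.exp (2 * Real.pi * Complex.I / m) ^ (ℓ * n) /
          (1 - Complex.exp (2 * Real.pi * Complex.I / m) ^ ℓ) ^ 2
      = ((-(((m : ℝ)) ^ 2 / 2) *
          ((Int.fract (((n : ℝ) - 1) / m)) ^ 2 - Int.fract (((n : ℝ) - 1) / m) + 1 / 6
            - 1 / (6 * (m : ℝ) ^ 2)) : ℝ) : ℂ) := by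
  obtain ⟨N, rfl⟩ : ∃ N, n = N + 1 := ⟨n - 1, by omega⟩
  have hm0 : (m : ℂ) ≠ 0 := by norm_cast; omega
  have hsum := IsPrimitiveRoot.twelve_mul_sum_Icc_pow_mul_succ_div_one_sub_sq
    (Complex.isPrimitiveRoot_exp m (by omega)) (mul_ne_zero two_ne_zero hm0) N
  push_cast
  rw [add_sub_cancel_right, Int.fract_div_natCast_eq_div_natCast_mod]
  push_cast
  field_simp
  linear_combination hsum
end

section
/- Let n ≥ 2 be an integer and λ > 1 a real number. Then 2^{2n−1} n(n−1)(2n−1) λⁿ (λ−1) · ∫₀^∞ y^{2n−3}(2y+1)/(2λy + λ − 1)^{2n+1} dy = (n−1) λ^{1−n}/(λ−1) + λ^{2−n}/(λ−1)², the integral being absolutely convergent. -/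
/-!
The substitution `t = y / (a y + c)` maps `(0, ∞)` onto `(0, 1 / a)`, with `dt = c / (a y + c)² dy`
and `1 - a t = c / (a y + c)`. It turns `y^k (p y + q) / (a y + c)^(k+4) dy` into the polynomial
`t^k (1 - a t) (q (1 - a t) + p c t) / c³ dt`, so the integral is `P (1 / a) - P 0` for an explicit
antiderivative `P`; nonnegativity of the integrand gives absolute convergence for free. The theorem
is the case `k = 2n - 3`, `a = 2λ`, `c = λ - 1`, `p = 2`, `q = 1`.
-/

open MeasureTheory Set Filter Topology

section LinearFractional

variable {a c : ℝ}

theorem hasDerivAt_div_linear {y : ℝ} (h : a * y + c ≠ 0) :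
    HasDerivAt (fun y => y / (a * y + c)) (c / (a * y + c) ^ 2) y := by
  have hlin : HasDerivAt (fun y => a * y + c) a y := by
    simpa using ((hasDerivAt_id y).const_mul a).add_const c
  rw [show c / (a * y + c) ^ 2 = (1 * (a * y + c) - y * a) / (a * y + c) ^ 2 by ring]
  exact (hasDerivAt_id' y).div hlin h

theorem tendsto_div_linear_atTop (ha : a ≠ 0) :
    Tendsto (fun y => y / (a * y + c)) atTop (𝓝 (1 / a)) := by
  have h : Tendsto (fun y : ℝ => (a + c * y⁻¹)⁻¹) atTop (𝓝 (1 / a)) := by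
    simpa [one_div] using ((tendsto_inv_atTop_zero.const_mul c).const_add a).inv₀ (by simpa using ha)
  refine h.congr' ?_
  filter_upwards [eventually_gt_atTop 0] with y hy
  field_simp

theorem integral_Ioi_comp_div_linear (ha : 0 < a) (hc : 0 < c) {P P' : ℝ → ℝ}
    (hP : ∀ t, HasDerivAt P (P' t) t)
    (hnonneg : ∀ y ∈ Ioi (0 : ℝ), 0 ≤ P' (y / (a * y + c)) * (c / (a * y + c) ^ 2)) :
    IntegrableOn (fun y => P' (y / (a * y + c)) * (c / (a * y + c) ^ 2)) (Ioi 0) ∧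
      ∫ y in Ioi (0 : ℝ), P' (y / (a * y + c)) * (c / (a * y + c) ^ 2) = P (1 / a) - P 0 := by
  have hderiv : ∀ y ∈ Ici (0 : ℝ), HasDerivAt (fun y => P (y / (a * y + c)))
      (P' (y / (a * y + c)) * (c / (a * y + c) ^ 2)) y := fun y hy =>
    (hP _).comp y (hasDerivAt_div_linear (by have : (0 : ℝ) ≤ y := hy; positivity))
  have hlim : Tendsto (fun y => P (y / (a * y + c))) atTop (𝓝 (P (1 / a))) :=
    (hP _).continuousAt.tendsto.comp (tendsto_div_linear_atTop ha.ne')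
  refine ⟨integrableOn_Ioi_deriv_of_nonneg' hderiv hnonneg hlim, ?_⟩
  rw [integral_Ioi_of_hasDerivAt_of_nonneg' hderiv hnonneg hlim]
  simp

end LinearFractional

theorem hasDerivAt_pow_succ_div_succ (n : ℕ) (t : ℝ) :
    HasDerivAt (fun t => t ^ (n + 1) / ((n : ℝ) + 1)) (t ^ n) t := by
  refine ((hasDerivAt_pow (n + 1) t).div_const ((n : ℝ) + 1)).congr_deriv ?_
  push_cast
  field_simp

theorem integral_Ioi_pow_mul_linear_div_linear_pow (k : ℕ) {a c p q : ℝ} (ha : 0 < a) (hc : 0 < c)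
    (hp : 0 ≤ p) (hq : 0 ≤ q) :
    IntegrableOn (fun y => y ^ k * (p * y + q) / (a * y + c) ^ (k + 4)) (Ioi 0) ∧
      ∫ y in Ioi (0 : ℝ), y ^ k * (p * y + q) / (a * y + c) ^ (k + 4) =
        (2 * q * a + p * (k + 1) * c) / ((k + 1) * (k + 2) * (k + 3) * c ^ 3 * a ^ (k + 2)) := by
  set P' : ℝ → ℝ := fun t => t ^ k * (1 - a * t) * (q * (1 - a * t) + p * c * t) / c ^ 3
  set P : ℝ → ℝ := fun t => (q * (t ^ (k + 1) / ((k : ℝ) + 1))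
      + (p * c - 2 * q * a) * (t ^ (k + 1 + 1) / (((k + 1 : ℕ) : ℝ) + 1))
      + (q * a ^ 2 - p * c * a) * (t ^ (k + 2 + 1) / (((k + 2 : ℕ) : ℝ) + 1))) / c ^ 3
  have hP : ∀ t, HasDerivAt P (P' t) t := by
    intro t
    refine ((((hasDerivAt_pow_succ_div_succ k t).const_mul q).add
      ((hasDerivAt_pow_succ_div_succ (k + 1) t).const_mul (p * c - 2 * q * a))).add
      ((hasDerivAt_pow_succ_div_succ (k + 2) t).const_mul (q * a ^ 2 - p * c * a))).div_const
      (c ^ 3) |>.congr_deriv ?_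
    ring
  have hsubst : ∀ y ∈ Ioi (0 : ℝ),
      y ^ k * (p * y + q) / (a * y + c) ^ (k + 4) = P' (y / (a * y + c)) * (c / (a * y + c) ^ 2) := by
    intro y (hy : 0 < y)
    have h1 : 1 - a * (y / (a * y + c)) = c / (a * y + c) := by field_simp; ring
    simp only [P', h1, div_pow]
    field_simp
    ring
  have hnonneg : ∀ y ∈ Ioi (0 : ℝ), 0 ≤ P' (y / (a * y + c)) * (c / (a * y + c) ^ 2) := by
    intro y hy
    rw [← hsubst y hy]
    have : 0 < y := hy
    positivity
  obtain ⟨hint, hval⟩ := integral_Ioi_comp_div_linear ha hc hP hnonneg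
  refine ⟨hint.congr_fun (fun y hy => (hsubst y hy).symm) measurableSet_Ioi, ?_⟩
  rw [setIntegral_congr_fun measurableSet_Ioi hsubst, hval]
  simp only [P, one_div_pow, pow_succ]
  push_cast
  field_simp
  ring

/-- Let `n ≥ 2` be an integer and `λ > 1` real.  Then
`2^{2n-1} n (n-1) (2n-1) λⁿ (λ-1) ∫₀^∞ y^{2n-3}(2y+1)/(2λy + λ - 1)^{2n+1} dy
  = (n-1) λ^{1-n}/(λ-1) + λ^{2-n}/(λ-1)²`, the integral being absolutely convergent. -/
theorem stmt14 (n : ℕ) (hn : 2 ≤ n) (lam : ℝ) (hlam : 1 < lam) :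
    IntegrableOn
      (fun y => y ^ (2 * n - 3) * (2 * y + 1) / (2 * lam * y + lam - 1) ^ (2 * n + 1))
      (Set.Ioi (0 : ℝ)) volume ∧
    (2 : ℝ) ^ (2 * n - 1) * (n : ℝ) * ((n : ℝ) - 1) * (2 * (n : ℝ) - 1) * lam ^ n *
        (lam - 1) *
        ∫ y in Set.Ioi (0 : ℝ),
          y ^ (2 * n - 3) * (2 * y + 1) / (2 * lam * y + lam - 1) ^ (2 * n + 1)
      = ((n : ℝ) - 1) * lam ^ (1 - (n : ℤ)) / (lam - 1) +
        lam ^ (2 - (n : ℤ)) / (lam - 1) ^ 2 := by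
  obtain ⟨m, rfl⟩ : ∃ m, n = m + 2 := ⟨n - 2, by omega⟩
  obtain ⟨hint, hval⟩ := integral_Ioi_pow_mul_linear_div_linear_pow (2 * m + 1)
    (by linarith : (0 : ℝ) < 2 * lam) (by linarith : (0 : ℝ) < lam - 1) zero_le_two zero_le_one
  simp only [show 2 * (m + 2) - 3 = 2 * m + 1 by omega, show 2 * (m + 2) + 1 = 2 * m + 1 + 4 by omega,
    show 2 * (m + 2) - 1 = 2 * m + 3 by omega, add_sub_assoc]
  refine ⟨hint, ?_⟩
  rw [hval, show (1 : ℤ) - (m + 2 : ℕ) = -(m + 1 : ℕ) by push_cast; ring,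
    show (2 : ℤ) - (m + 2 : ℕ) = -(m : ℕ) by push_cast; ring, zpow_neg, zpow_neg, zpow_natCast,
    zpow_natCast]
  have hlam₀ : lam ≠ 0 := by linarith
  have hlam₁ : lam - 1 ≠ 0 := by linarith
  push_cast
  field_simp
  ring
end

section
/- For every integer k ≥ 2, ∫_D [ ((1 − |w|²)(1 + |w|²)/2) · log(1/|w|²) − (1 − |w|²)² ] · |w|^{2k−4} d²w = 2πk/(k³ − k)², the integral over the open unit disc D being absolutely convergent. -/
/-!
In polar coordinates the integral becomes `2π ∫₀¹ r φ(r) dr`, where `φ` is the radial profile of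
the integrand. Since `log (1 / r²) = -2 log r`, `r φ(r)` is a combination of monomials `rⁿ` and of
`rⁿ log r`, whose integrals over `[0, 1]` are `1 / (n + 1)` and `-1 / (n + 1)²`; with `k = m + 2`
the resulting rational function of `m` collapses to `k / (k³ - k)²`.
-/

open MeasureTheory Set Metric Real

section RadialIntegrals

variable {E F : Type*} [NormedAddCommGroup E] [NormedSpace ℝ E] [Nontrivial E]
  [FiniteDimensional ℝ E] [MeasurableSpace E] [BorelSpace E]
  [NormedAddCommGroup F] [NormedSpace ℝ F] (μ : Measure E) [μ.IsAddHaarMeasure]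

theorem setIntegral_ball_fun_norm_addHaar (f : ℝ → F) (r : ℝ) :
    ∫ x in ball (0 : E) r, f ‖x‖ ∂μ = Module.finrank ℝ E • μ.real (ball 0 1) •
      ∫ y in Ioo 0 r, y ^ (Module.finrank ℝ E - 1) • f y := by
  have hind : (ball (0 : E) r).indicator (fun x => f ‖x‖) =
      fun x => (Iio r).indicator f ‖x‖ := by
    ext x
    simp [indicator]
  rw [← integral_indicator measurableSet_ball, hind, integral_fun_norm_addHaar,
    setIntegral_congr_fun measurableSet_Ioi
      (g := (Ioo 0 r).indicator fun y => y ^ (Module.finrank ℝ E - 1) • f y),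
    setIntegral_indicator measurableSet_Ioo, inter_eq_self_of_subset_right Ioo_subset_Ioi_self]
  intro y (hy : 0 < y)
  by_cases hyr : y < r <;> simp [hyr, hy]

end RadialIntegrals

theorem Complex.setIntegral_ball_fun_norm (f : ℝ → ℝ) {r : ℝ} (hr : 0 ≤ r) :
    ∫ w in ball (0 : ℂ) r, f ‖w‖ = 2 * π * ∫ y in 0..r, y * f y := by
  rw [setIntegral_ball_fun_norm_addHaar, Complex.finrank_real_complex, measureReal_def,
    Complex.volume_ball, intervalIntegral.integral_of_le hr, integral_Ioc_eq_integral_Ioo]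
  simp
  ring

theorem Complex.integrableOn_ball_fun_norm_iff {f : ℝ → ℝ} {r : ℝ} (hr : 0 ≤ r) :
    IntegrableOn (fun w : ℂ => f ‖w‖) (ball 0 r) ↔
      IntervalIntegrable (fun y => y * f y) volume 0 r := by
  rw [integrableOn_fun_norm_addHaar, Complex.finrank_real_complex,
    intervalIntegrable_iff_integrableOn_Ioo_of_le hr]
  simp

theorem continuous_pow_succ_mul_log (n : ℕ) : Continuous fun x : ℝ => x ^ (n + 1) * log x :=
  ((continuous_pow n).mul continuous_mul_log).congr fun x => by simp only [Pi.mul_apply]; ring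

theorem integral_pow_succ_mul_log (n : ℕ) :
    ∫ x in (0 : ℝ)..1, x ^ (n + 1) * log x = -1 / ((n : ℝ) + 2) ^ 2 := by
  have hn : (n : ℝ) + 2 ≠ 0 := by positivity
  have hderiv (x : ℝ) (hx : x ≠ 0) : HasDerivAt
      (fun x => x ^ (n + 2) * log x / (n + 2) - x ^ (n + 2) / (n + 2) ^ 2)
      (x ^ (n + 1) * log x) x := by
    refine ((((hasDerivAt_pow (n + 2) x).mul (hasDerivAt_log hx)).div_const _).sub
      ((hasDerivAt_pow (n + 2) x).div_const _)).congr_deriv ?_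
    rw [show n + 2 - 1 = n + 1 from rfl]
    push_cast
    field_simp
    ring
  rw [intervalIntegral.integral_eq_sub_of_hasDerivAt_of_le zero_le_one
    (((continuous_pow_succ_mul_log (n + 1)).div_const _).sub
      ((continuous_pow _).div_const _)).continuousOn
    (fun x hx => hderiv x hx.1.ne') ((continuous_pow_succ_mul_log n).intervalIntegrable _ _)]
  simp [neg_div]

noncomputable def radialProfile (k : ℕ) (r : ℝ) : ℝ :=
  (((1 - r ^ 2) * (1 + r ^ 2) / 2) * log (1 / r ^ 2) - (1 - r ^ 2) ^ 2) * r ^ (2 * k - 4)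

theorem mul_radialProfile (k : ℕ) (r : ℝ) :
    r * radialProfile k r =
      (r ^ 4 - 1) * r ^ (2 * k - 4) * (r * log r) - (1 - r ^ 2) ^ 2 * r ^ (2 * k - 4) * r := by
  simp only [radialProfile, one_div, log_inv, log_pow]
  push_cast
  ring

theorem continuous_mul_radialProfile (k : ℕ) : Continuous fun r => r * radialProfile k r := by
  simp only [mul_radialProfile]
  fun_prop

theorem integral_mul_radialProfile {k : ℕ} (hk : 2 ≤ k) :
    ∫ r in (0 : ℝ)..1, r * radialProfile k r = k / ((k : ℝ) ^ 3 - k) ^ 2 := by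
  obtain ⟨m, rfl⟩ := Nat.exists_eq_add_of_le' hk
  have hexp : 2 * (m + 2) - 4 = 2 * m := by omega
  have hsplit : (fun r => r * radialProfile (m + 2) r) = fun r =>
      (r ^ (2 * m + 4 + 1) * log r - r ^ (2 * m + 1) * log r) -
        (r ^ (2 * m + 1) - 2 * r ^ (2 * m + 3) + r ^ (2 * m + 5)) := by
    funext r
    rw [mul_radialProfile, hexp]
    ring
  have hlog (n : ℕ) := (continuous_pow_succ_mul_log n).intervalIntegrable (μ := volume) 0 1
  have hpow (n : ℕ) := (continuous_pow n).intervalIntegrable (μ := volume) (0 : ℝ) 1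
  rw [hsplit, intervalIntegral.integral_sub ((hlog _).sub (hlog _))
      (((hpow _).sub ((hpow _).const_mul 2)).add (hpow _)),
    intervalIntegral.integral_sub (hlog _) (hlog _),
    intervalIntegral.integral_add ((hpow _).sub ((hpow _).const_mul 2)) (hpow _),
    intervalIntegral.integral_sub (hpow _) ((hpow _).const_mul 2),
    intervalIntegral.integral_const_mul, integral_pow_succ_mul_log, integral_pow_succ_mul_log,
    integral_pow, integral_pow, integral_pow]
  have hden : ((m : ℝ) + 2) ^ 3 - ((m : ℝ) + 2) = (m + 1) * (m + 2) * (m + 3) := by ring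
  push_cast
  rw [hden]
  field_simp
  ring

/-- For every integer `k ≥ 2`,
`∫_D [ ((1-|w|²)(1+|w|²)/2) log(1/|w|²) - (1-|w|²)² ] |w|^{2k-4} d²w = 2πk/(k³-k)²`,
the integral over the open unit disc being absolutely convergent. -/
theorem stmt17 (k : ℕ) (hk : 2 ≤ k) :
    IntegrableOn (fun w : ℂ =>
        (((1 - ‖w‖ ^ 2) * (1 + ‖w‖ ^ 2) / 2) *
            Real.log (1 / ‖w‖ ^ 2) - (1 - ‖w‖ ^ 2) ^ 2) *
          ‖w‖ ^ (2 * k - 4))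
      (Metric.ball (0 : ℂ) 1) volume ∧
    ∫ w in Metric.ball (0 : ℂ) 1,
        (((1 - ‖w‖ ^ 2) * (1 + ‖w‖ ^ 2) / 2) *
            Real.log (1 / ‖w‖ ^ 2) - (1 - ‖w‖ ^ 2) ^ 2) *
          ‖w‖ ^ (2 * k - 4)
      = 2 * Real.pi * (k : ℝ) / ((k : ℝ) ^ 3 - (k : ℝ)) ^ 2 := by
  change IntegrableOn (fun w : ℂ => radialProfile k ‖w‖) (ball 0 1) volume ∧
    ∫ w in ball (0 : ℂ) 1, radialProfile k ‖w‖ = _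
  refine ⟨(Complex.integrableOn_ball_fun_norm_iff zero_le_one).2
    ((continuous_mul_radialProfile k).intervalIntegrable 0 1), ?_⟩
  rw [Complex.setIntegral_ball_fun_norm _ zero_le_one, integral_mul_radialProfile hk, mul_div_assoc]
end

section
/- Let n ≥ 1 be an integer. For u > 0 define Ψ(u) = (1/(4π)) ∑_{k=0}^∞ (u+1)^{−k−1}/(2n + k − 1), and for z, w in the upper half-plane U with z ≠ w define 𝒢(z,w) = Ψ(u(z,w)) · (−4)^{n−1}/(z − w̄)^{2n−2}, where u(z,w) = |z − w|²/(4 Im z · Im w). Then, for each fixed w ∈ U, the function z ↦ (Im z)^{2n−2} 𝒢(z,w) has Wirtinger derivative ∂/∂z [ (Im z)^{2n−2} 𝒢(z,w) ] = −(1/(4π)) · (Im z)^{2n−2} · ((w − w̄)/(z − w)) · (−4)^{n−1}/(z − w̄)^{2n−1} at every z ∈ U with z ≠ w. -/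
/-!
Put `m = 2n - 2` and `q = 1/(u + 1)`. Summing the series gives the closed form
`Ψ(u) = (1/4π) q^{-m} (-log (1 - q) - ∑_{j<m} q^{j+1}/(j+1))`, and for `z ∈ U` the number `q`
is the value at `c = z̄` of the cross ratio `Q(ζ, c) = (w - w̄)(c - ζ)/((ζ - w̄)(c - w))`.
Hence `(Im z)^m 𝒢(z, w) = g(z, z̄)` for a function `g(ζ, c)` holomorphic in both variables near
`(z, z̄)`, so `∂/∂z` is the partial derivative `∂g/∂ζ`. The tail of the logarithm series has
derivative `Q^m/(1 - Q)`, and the chain rule gives the formula.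
-/

open MeasureTheory ComplexConjugate

/-- `Ψ(u) = (1/(4π)) ∑_{k=0}^∞ (u+1)^{-k-1} / (2n + k - 1)`. -/
noncomputable def PsiKer (n : ℕ) (u : ℝ) : ℝ :=
  (1 / (4 * Real.pi)) * ∑' k : ℕ, 1 / ((u + 1) ^ (k + 1) * ((2 * n + k - 1 : ℕ) : ℝ))

/-- The point-pair invariant `u(z,w) = |z - w|² / (4 Im z · Im w)`. -/
noncomputable def ptInv (z w : ℂ) : ℝ :=
  ‖z - w‖ ^ 2 / (4 * z.im * w.im)

/-- `𝒢(z,w) = Ψ(u(z,w)) · (-4)^{n-1} / (z - w̄)^{2n-2}`. -/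
noncomputable def Gker (n : ℕ) (z w : ℂ) : ℂ :=
  ((PsiKer n (ptInv z w) : ℝ) : ℂ) * (-4 : ℂ) ^ (n - 1) / (z - conj w) ^ (2 * n - 2)

open Complex Topology

theorem exists_hasFDerivAt_wirtinger_eq {f : ℂ → ℂ} {g : ℂ × ℂ → ℂ} {z d : ℂ}
    (hg : DifferentiableAt ℂ g (z, conj z)) (hg₁ : HasDerivAt (fun ζ => g (ζ, conj z)) d z)
    (hfg : f =ᶠ[𝓝 z] fun x => g (x, conj x)) :
    ∃ L : ℂ →L[ℝ] ℂ, HasFDerivAt f L z ∧ (1 / 2 : ℂ) * (L 1 - I * L I) = d := by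
  set D := fderiv ℂ g (z, conj z)
  have hD : HasFDerivAt g D (z, conj z) := hg.hasFDerivAt
  have hd : D (1, 0) = d := by
    rw [← (hD.comp z (hasFDerivAt_prodMk_left z (conj z))).hasDerivAt.unique hg₁]
    simp
  set T : ℂ →L[ℝ] ℂ × ℂ := (ContinuousLinearMap.id ℝ ℂ).prod conjCLE.toContinuousLinearMap
  have hT : HasFDerivAt (fun x : ℂ => (x, conj x)) T z := T.hasFDerivAt
  refine ⟨(D.restrictScalars ℝ).comp T,
    ((hD.restrictScalars ℝ).comp z hT).congr_of_eventuallyEq hfg, ?_⟩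
  -- `L 1 = D (1, 1)` and `L I = D (I, -I)`
  have hI : ((I : ℂ), -I) = I • ((1 : ℂ), (0 : ℂ)) + (-I) • ((0 : ℂ), (1 : ℂ)) := by simp
  have h1 : ((1 : ℂ), (1 : ℂ)) = ((1 : ℂ), (0 : ℂ)) + ((0 : ℂ), (1 : ℂ)) := by simp
  simp only [ContinuousLinearMap.comp_apply, ContinuousLinearMap.coe_restrictScalars', T,
    ContinuousLinearMap.prod_apply, ContinuousLinearMap.id_apply,
    ContinuousLinearEquiv.coe_coe, conjCLE_apply, map_one, conj_I]
  rw [hI, h1, map_add, map_add, map_smul, map_smul, smul_eq_mul, smul_eq_mul, ← hd]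
  linear_combination (D (0, 1) - D (1, 0)) / 2 * I_mul_I

noncomputable def logTail (m : ℕ) (q : ℂ) : ℂ :=
  -log (1 - q) - ∑ j ∈ Finset.range m, q ^ (j + 1) / (j + 1)

theorem hasSum_logTail (m : ℕ) {q : ℂ} (hq : ‖q‖ < 1) :
    HasSum (fun k : ℕ => q ^ (k + m + 1) / (k + m + 1)) (logTail m q) := by
  have h := (hasSum_nat_add_iff' m).2 (hasSum_taylorSeries_neg_log' hq)
  push_cast at h
  exact h

theorem hasDerivAt_logTail (m : ℕ) {q : ℂ} (hq : 1 - q ∈ slitPlane) :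
    HasDerivAt (logTail m) (q ^ m / (1 - q)) q := by
  have hq₀ : 1 - q ≠ 0 := slitPlane_ne_zero hq
  have hq₁ : q ≠ 1 := fun h => hq₀ (by rw [h, sub_self])
  have hlog := ((hasDerivAt_id q).const_sub 1).clog hq
  have hsum : HasDerivAt (fun q : ℂ => ∑ j ∈ Finset.range m, q ^ (j + 1) / (j + 1))
      (∑ j ∈ Finset.range m, q ^ j) q := by
    refine HasDerivAt.fun_sum fun j _ => ?_
    refine ((hasDerivAt_pow (j + 1) q).div_const ((j : ℂ) + 1)).congr_deriv ?_
    rw [Nat.add_sub_cancel]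
    push_cast
    field_simp
  refine HasDerivAt.congr_deriv (f := logTail m) (hlog.neg.sub hsum) ?_
  rw [geom_sum_eq hq₁, id]
  field_simp
  ring

theorem ofReal_psiKer {n : ℕ} (hn : 1 ≤ n) {u : ℝ} (hu : 0 < u) :
    (PsiKer n u : ℂ) = logTail (2 * n - 2) (((u + 1)⁻¹ : ℝ) : ℂ) /
      (4 * (Real.pi : ℂ) * (((u + 1)⁻¹ : ℝ) : ℂ) ^ (2 * n - 2)) := by
  have hk (k : ℕ) : 2 * n + k - 1 = k + (2 * n - 2) + 1 := by omega
  simp only [PsiKer, hk]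
  generalize 2 * n - 2 = m
  have hu₁ : (u : ℂ) + 1 ≠ 0 := by exact_mod_cast (by linarith : u + 1 ≠ 0)
  have hq : ‖(((u + 1)⁻¹ : ℝ) : ℂ)‖ < 1 := by
    rw [norm_real, Real.norm_of_nonneg (by positivity)]
    exact inv_lt_one_of_one_lt₀ (by linarith)
  have hsum := (hasSum_logTail m hq).div_const (4 * (Real.pi : ℂ) * (((u + 1)⁻¹ : ℝ) : ℂ) ^ m)
  rw [ofReal_mul, ofReal_tsum, ← hsum.tsum_eq, ← tsum_mul_left]
  congr 1
  ext k
  have hkm : (k : ℂ) + m + 1 ≠ 0 := by exact_mod_cast Nat.succ_ne_zero (k + m)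
  push_cast
  simp only [inv_pow]
  field_simp
  ring

theorem sub_conj_ne_zero_of_im_pos {z w : ℂ} (hz : 0 < z.im) (hw : 0 < w.im) :
    z - conj w ≠ 0 := by
  intro h
  have := congrArg im h
  simp only [sub_im, conj_im, sub_neg_eq_add, zero_im] at this
  linarith

theorem conj_sub_ne_zero_of_im_pos {z w : ℂ} (hz : 0 < z.im) (hw : 0 < w.im) :
    conj z - w ≠ 0 := by
  simpa using (map_ne_zero (starRingEnd ℂ)).2 (sub_conj_ne_zero_of_im_pos hz hw)

theorem sub_conj_mul_conj_sub (z w : ℂ) :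
    (w - conj w) * (conj z - z) = 4 * z.im * w.im := by
  rw [sub_conj, ← neg_sub, sub_conj]
  push_cast
  linear_combination (-4 * (z.im : ℂ) * w.im) * I_mul_I

theorem sub_conj_mul_conj_sub_conj (z w : ℂ) :
    (z - conj w) * (conj z - w) = ‖z - w‖ ^ 2 + 4 * z.im * w.im := by
  rw [← ofReal_pow, Complex.sq_norm]
  apply Complex.ext <;> simp [normSq_apply] <;> ring

theorem ptInv_pos {z w : ℂ} (hz : 0 < z.im) (hw : 0 < w.im) (hzw : z ≠ w) : 0 < ptInv z w :=
  div_pos (pow_pos (norm_pos_iff.2 (sub_ne_zero.2 hzw)) 2) (by positivity)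

noncomputable def crossRatio (w ζ c : ℂ) : ℂ :=
  (w - conj w) * (c - ζ) / ((ζ - conj w) * (c - w))

section CrossRatio

variable {w ζ c : ℂ}

theorem crossRatio_mul (hζ : ζ - conj w ≠ 0) (hc : c - w ≠ 0) :
    crossRatio w ζ c * ((ζ - conj w) * (c - w)) = (w - conj w) * (c - ζ) := by
  rw [crossRatio]
  field_simp

theorem one_sub_crossRatio (hζ : ζ - conj w ≠ 0) (hc : c - w ≠ 0) :
    1 - crossRatio w ζ c = (ζ - w) * (c - conj w) / ((ζ - conj w) * (c - w)) := by
  rw [crossRatio]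
  field_simp
  ring

theorem hasDerivAt_crossRatio_fst (hζ : ζ - conj w ≠ 0) (hc : c - w ≠ 0) :
    HasDerivAt (fun ζ => crossRatio w ζ c)
      (-(w - conj w) * (c - conj w) / ((ζ - conj w) ^ 2 * (c - w))) ζ := by
  have h := (((hasDerivAt_id ζ).const_sub c).const_mul (w - conj w)).div
    (((hasDerivAt_id ζ).sub_const (conj w)).mul_const (c - w)) (mul_ne_zero hζ hc)
  refine h.congr_deriv ?_
  simp only [id]
  field_simp
  ring

theorem differentiableAt_crossRatio (hζ : ζ - conj w ≠ 0) (hc : c - w ≠ 0) :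
    DifferentiableAt ℂ (fun p : ℂ × ℂ => crossRatio w p.1 p.2) (ζ, c) := by
  simp only [crossRatio]
  fun_prop (disch := exact mul_ne_zero hζ hc)

theorem crossRatio_conj_mul {z : ℂ} (hz : 0 < z.im) (hw : 0 < w.im) :
    crossRatio w z (conj z) * ((z - conj w) * (conj z - w)) = 4 * z.im * w.im := by
  rw [crossRatio_mul (sub_conj_ne_zero_of_im_pos hz hw) (conj_sub_ne_zero_of_im_pos hz hw),
    sub_conj_mul_conj_sub]

theorem crossRatio_conj {z : ℂ} (hz : 0 < z.im) (hw : 0 < w.im) :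
    crossRatio w z (conj z) = ((ptInv z w + 1)⁻¹ : ℝ) := by
  rw [crossRatio, sub_conj_mul_conj_sub, sub_conj_mul_conj_sub_conj, ptInv]
  norm_cast
  field_simp

theorem one_sub_crossRatio_conj_mem_slitPlane {z : ℂ} (hz : 0 < z.im) (hw : 0 < w.im)
    (hzw : z ≠ w) : 1 - crossRatio w z (conj z) ∈ slitPlane := by
  rw [crossRatio_conj hz hw, ← ofReal_one, ← ofReal_sub]
  refine ofReal_mem_slitPlane.2 (sub_pos.2 (inv_lt_one_of_one_lt₀ ?_))
  linarith [ptInv_pos hz hw hzw]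

end CrossRatio

noncomputable def gkerLift (n : ℕ) (w : ℂ) (p : ℂ × ℂ) : ℂ :=
  (-4 : ℂ) ^ (n - 1) / (4 * Real.pi * (4 * w.im) ^ (2 * n - 2)) * (p.2 - w) ^ (2 * n - 2) *
    logTail (2 * n - 2) (crossRatio w p.1 p.2)

section gkerLift

variable {n : ℕ} {w z : ℂ}

theorem im_pow_mul_Gker_eq_gkerLift (hn : 1 ≤ n) (hw : 0 < w.im) (hz : 0 < z.im) (hzw : z ≠ w) :
    (z.im : ℂ) ^ (2 * n - 2) * Gker n z w = gkerLift n w (z, conj z) := by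
  have ha := sub_conj_ne_zero_of_im_pos hz hw
  have hQ := crossRatio_conj_mul hz hw
  rw [Gker, ofReal_psiKer hn (ptInv_pos hz hw hzw), ← crossRatio_conj hz hw, gkerLift]
  have hQ₀ : crossRatio w z (conj z) ≠ 0 := by
    rw [crossRatio_conj hz hw]
    exact ofReal_ne_zero.2 (inv_ne_zero (by linarith [ptInv_pos hz hw hzw]))
  have hpow := congrArg (· ^ (2 * n - 2)) hQ
  simp only [mul_pow] at hpow
  have hπ : (Real.pi : ℂ) ≠ 0 := ofReal_ne_zero.2 Real.pi_ne_zero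
  have hw' : (w.im : ℂ) ≠ 0 := ofReal_ne_zero.2 hw.ne'
  field_simp
  linear_combination -logTail (2 * n - 2) (crossRatio w z (conj z)) * hpow

theorem differentiableAt_gkerLift (hw : 0 < w.im) (hz : 0 < z.im) (hzw : z ≠ w) :
    DifferentiableAt ℂ (gkerLift n w) (z, conj z) := by
  have hlog := (hasDerivAt_logTail (2 * n - 2)
    (one_sub_crossRatio_conj_mem_slitPlane hz hw hzw)).differentiableAt
  have hQ := differentiableAt_crossRatio (sub_conj_ne_zero_of_im_pos hz hw)
    (conj_sub_ne_zero_of_im_pos hz hw)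
  exact ((differentiableAt_const _).mul ((differentiableAt_snd.sub_const w).pow _)).mul
    (hlog.fun_comp' (z, conj z) hQ)

theorem hasDerivAt_gkerLift_fst (hn : 1 ≤ n) (hw : 0 < w.im) (hz : 0 < z.im) (hzw : z ≠ w) :
    HasDerivAt (fun ζ => gkerLift n w (ζ, conj z))
      (-(1 / (4 * (Real.pi : ℂ))) * ((z.im : ℂ)) ^ (2 * n - 2) *
        ((w - conj w) / (z - w)) * (-4 : ℂ) ^ (n - 1) / (z - conj w) ^ (2 * n - 1)) z := by
  have ha := sub_conj_ne_zero_of_im_pos hz hw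
  have hb := conj_sub_ne_zero_of_im_pos hz hw
  have hzw' : z - w ≠ 0 := sub_ne_zero.2 hzw
  have hzw'' : conj z - conj w ≠ 0 := by
    rw [← map_sub]
    exact (map_ne_zero _).2 hzw'
  have h := ((hasDerivAt_logTail (2 * n - 2) (one_sub_crossRatio_conj_mem_slitPlane hz hw hzw)).comp
    z (hasDerivAt_crossRatio_fst ha hb)).const_mul
    ((-4 : ℂ) ^ (n - 1) / (4 * Real.pi * (4 * w.im) ^ (2 * n - 2)) * (conj z - w) ^ (2 * n - 2))
  refine h.congr_deriv ?_
  have hpow := congrArg (· ^ (2 * n - 2)) (crossRatio_conj_mul hz hw)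
  simp only [mul_pow] at hpow
  have hπ : (Real.pi : ℂ) ≠ 0 := ofReal_ne_zero.2 Real.pi_ne_zero
  have hw' : (w.im : ℂ) ≠ 0 := ofReal_ne_zero.2 hw.ne'
  rw [one_sub_crossRatio ha hb, show 2 * n - 1 = 2 * n - 2 + 1 by omega, pow_succ]
  field_simp
  linear_combination (w - conj w) * (conj w - z) * hpow

end gkerLift

/-- For each fixed `w` in the upper half-plane, the function
`z ↦ (Im z)^{2n-2} 𝒢(z,w)` has Wirtinger derivative
`∂/∂z [ (Im z)^{2n-2} 𝒢(z,w) ]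
  = -(1/(4π)) (Im z)^{2n-2} ((w - w̄)/(z - w)) (-4)^{n-1}/(z - w̄)^{2n-1}`
at every `z` in the upper half-plane with `z ≠ w`.  The Wirtinger derivative `∂/∂z` of a
real-differentiable map with (real) Fréchet derivative `L` is `(1/2)(L 1 - i · L i)`. -/
theorem stmt19 (n : ℕ) (hn : 1 ≤ n) (w : ℂ) (hw : 0 < w.im)
    (z : ℂ) (hz : 0 < z.im) (hzw : z ≠ w) :
    ∃ L : ℂ →L[ℝ] ℂ,
      HasFDerivAt (fun z : ℂ => ((z.im : ℂ)) ^ (2 * n - 2) * Gker n z w) L z ∧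
      (1 / 2 : ℂ) * (L 1 - Complex.I * L Complex.I) =
        -(1 / (4 * (Real.pi : ℂ))) * ((z.im : ℂ)) ^ (2 * n - 2) *
          ((w - conj w) / (z - w)) * (-4 : ℂ) ^ (n - 1) / (z - conj w) ^ (2 * n - 1) := by
  have hU : {x : ℂ | 0 < x.im ∧ x ≠ w} ∈ 𝓝 z :=
    ((isOpen_lt continuous_const continuous_im).inter isOpen_compl_singleton).mem_nhds ⟨hz, hzw⟩
  have hlift : (fun x : ℂ => (x.im : ℂ) ^ (2 * n - 2) * Gker n x w) =ᶠ[𝓝 z]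
      fun x => gkerLift n w (x, conj x) := by
    filter_upwards [hU] with x hx
    exact im_pow_mul_Gker_eq_gkerLift hn hw hx.1 hx.2
  exact exists_hasFDerivAt_wirtinger_eq (differentiableAt_gkerLift hw hz hzw)
    (hasDerivAt_gkerLift_fst hn hw hz hzw) hlift
end
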